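/- Decomposition of operadic composition in a group operad: in any group operad 𝒢, for every x ∈ G n and all xᵢ ∈ G kᵢ (1 ≤ i ≤ n), γ(x; x₁, …, xₙ) = γ(x; e_{k₁}, …, e_{kₙ}) · γ(e₃; e₀, x₁, e_{k₂+⋯+kₙ}) · γ(e₃; e_{k₁}, x₂, e_{k₃+⋯+kₙ}) ⋯ γ(e₃; e_{k₁+⋯+k_{n−1}}, xₙ, e₀), where all factors are regarded as elements of G(k₁+⋯+kₙ) and eₘ denotes the group unit of G m. -/

import Mathlib

/-- Splitting a sigma type over `Option`. -/
def sigmaOptionEquiv {γ : Type*} (β : Option γ → Type*) :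
    (Σ o : Option γ, β o) ≃ (β none ⊕ Σ c : γ, β (some c)) where
  toFun := fun x => match x with
    | ⟨none, b⟩ => .inl b
    | ⟨some c, b⟩ => .inr ⟨c, b⟩
  invFun := fun x => match x with
    | .inl b => ⟨none, b⟩
    | .inr ⟨c, b⟩ => ⟨some c, b⟩
  left_inv := fun ⟨o, b⟩ => by cases o <;> rfl
  right_inv := fun x => by rcases x with b | ⟨c, b⟩ <;> rfl

/-- The order-preserving flattening equivalence
`(Σ i : Fin n, Fin (k i)) ≃ Fin (∑ i, k i)`, listing the blocks in
increasing order of the index. -/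
def finSigmaFinEquivOrd : {n : ℕ} → {k : Fin n → ℕ} → (Σ i : Fin n, Fin (k i)) ≃ Fin (∑ i, k i)
  | 0, k => ((Equiv.equivOfIsEmpty (Σ i : Fin 0, Fin (k i)) (Fin 0)).trans
      (finCongr (show 0 = ∑ i : Fin 0, k i by simp)))
  | (n+1), k =>
    ((Equiv.sigmaCongrLeft (β := fun i => Fin (k i)) (finSuccEquiv n).symm).symm.trans
      ((sigmaOptionEquiv fun o => Fin (k ((finSuccEquiv n).symm o))).trans
        ((Equiv.sumCongr (finCongr (congrArg k (finSuccEquiv_symm_none)))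
            ((Equiv.sigmaCongrRight fun c =>
                finCongr (congrArg k (finSuccEquiv_symm_some c))).trans
              finSigmaFinEquivOrd)).trans
          (finSumFinEquiv.trans (finCongr (Fin.sum_univ_succ k).symm)))))

/-- Block-permutation composition in the operad of symmetric groups. -/
def blockComp {n : ℕ} (k : Fin n → ℕ) (σ : Equiv.Perm (Fin n))
    (σs : ∀ i, Equiv.Perm (Fin (k i))) : Equiv.Perm (Fin (∑ i, k i)) :=
  finSigmaFinEquivOrd.symm.trans <|
    (Equiv.sigmaCongr σ fun i =>
        (σs i).trans (finCongr (congrArg k (σ.symm_apply_apply i).symm))).trans <|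
      finSigmaFinEquivOrd.trans (finCongr (Equiv.sum_comp σ.symm k))

theorem flatten_sum_eq {n : ℕ} (k : Fin n → ℕ) (l : ∀ i : Fin n, Fin (k i) → ℕ) :
    (∑ j : Fin (∑ i, k i), l (finSigmaFinEquivOrd.symm j).1 (finSigmaFinEquivOrd.symm j).2)
      = ∑ i, ∑ s, l i s := by
  rw [Fintype.sum_equiv finSigmaFinEquivOrd.symm _ (fun a => l a.1 a.2) (fun _ => rfl)]
  rw [← Finset.univ_sigma_univ, Finset.sum_sigma]

/-- Transport an element of `G m` along an equality `m = n` of levels. -/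
def gcast (G : ℕ → Type) {m n : ℕ} (h : m = n) (x : G m) : G n := h ▸ x

/-- A group operad: a planar operad `G` with a group structure on each level,
a map of operads `π` to the operad of symmetric groups which is a levelwise
group homomorphism, subject to the interchange law. -/
structure GroupOperad (G : ℕ → Type) [∀ n, Group (G n)] where
  /-- operadic composition -/
  γ : ∀ {n : ℕ} {k : Fin n → ℕ}, G n → (∀ i, G (k i)) → G (∑ i, k i)
  /-- the operad identity -/
  e : G 1
  /-- the levelwise group homomorphisms to the symmetric groups -/
  π : ∀ {n : ℕ}, G n →* Equiv.Perm (Fin n)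
  π_e : π e = 1
  γ_id : ∀ {n : ℕ} (x : G n),
    gcast G (show (∑ _i : Fin 1, n) = n by simp)
      (γ (k := fun _ : Fin 1 => n) e fun _ => x) = x
  id_γ : ∀ {n : ℕ} (x : G n),
    gcast G (show (∑ _i : Fin n, 1) = n by simp)
      (γ (k := fun _ : Fin n => 1) x fun _ => e) = x
  γ_assoc : ∀ {n : ℕ} {k : Fin n → ℕ} {l : ∀ i : Fin n, Fin (k i) → ℕ}
      (x : G n) (xs : ∀ i, G (k i)) (ys : ∀ i s, G (l i s)),
    gcast G (flatten_sum_eq k l)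
        (γ (k := fun j => l (finSigmaFinEquivOrd.symm j).1 (finSigmaFinEquivOrd.symm j).2)
          (γ x xs) fun j => ys (finSigmaFinEquivOrd.symm j).1 (finSigmaFinEquivOrd.symm j).2)
      = γ x fun i => γ (xs i) (ys i)
  π_γ : ∀ {n : ℕ} {k : Fin n → ℕ} (x : G n) (xs : ∀ i, G (k i)),
    π (γ x xs) = blockComp k (π x) fun i => π (xs i)
  interchange : ∀ {n : ℕ} {k : Fin n → ℕ} (x y : G n) (xs ys : ∀ i, G (k i)),
    γ (x * y) (fun i => xs i * ys i)
      = gcast G (Equiv.sum_comp (π y).symm k)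
          (γ (k := fun j => k ((π y).symm j)) x fun j => xs ((π y).symm j))
        * γ y ys

/-- A vector of three natural numbers, as a function on `Fin 3`. -/
def v3 (p q r : ℕ) : Fin 3 → ℕ
  | ⟨0, _⟩ => p
  | ⟨1, _⟩ => q
  | ⟨2, _⟩ => r

/-- A triple of elements of the graded family `G`, indexed over `v3 p q r`. -/
def f3 {G : ℕ → Type} {p q r : ℕ} (a : G p) (b : G q) (c : G r) :
    ∀ i : Fin 3, G (v3 p q r i)
  | ⟨0, _⟩ => a
  | ⟨1, _⟩ => b
  | ⟨2, _⟩ => c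

theorem sum_v3 (p q r : ℕ) : (∑ i, v3 p q r i) = p + q + r := by
  rw [Fin.sum_univ_three]; rfl

/-- A vector of two natural numbers, as a function on `Fin 2`. -/
def v2 (p q : ℕ) : Fin 2 → ℕ
  | ⟨0, _⟩ => p
  | ⟨1, _⟩ => q

/-- A pair of elements of the graded family `G`, indexed over `v2 p q`. -/
def f2 {G : ℕ → Type} {p q : ℕ} (a : G p) (b : G q) :
    ∀ i : Fin 2, G (v2 p q i)
  | ⟨0, _⟩ => a
  | ⟨1, _⟩ => b

theorem sum_v2 (p q : ℕ) : (∑ i, v2 p q i) = p + q := by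
  rw [Fin.sum_univ_two]; rfl

theorem partial_sum_eq {n : ℕ} (k : Fin n → ℕ) (i : Fin n) :
    (∑ j ∈ Finset.univ.filter (fun j => j < i), k j) + k i
      + (∑ j ∈ Finset.univ.filter (fun j => i < j), k j) = ∑ j, k j := by
  classical
  have h2 : Finset.univ.filter (fun j => ¬ j < i)
      = insert i (Finset.univ.filter (fun j => i < j)) := by
    ext j
    simp [not_lt, le_iff_lt_or_eq, or_comm, eq_comm]
  rw [← Finset.sum_filter_add_sum_filter_not Finset.univ (fun j => j < i) k, h2,
    Finset.sum_insert (by simp)]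
  omega


theorem finSigmaFinEquivOrd_val : ∀ {n : ℕ} {k : Fin n → ℕ} (p : Σ i, Fin (k i)),
    ((finSigmaFinEquivOrd p : Fin (∑ i, k i)) : ℕ)
      = (∑ j : Fin p.1.val, k (Fin.castLE p.1.isLt.le j)) + p.2.val
  | 0, _, p => p.1.elim0
  | (n+1), k, ⟨⟨0, hi⟩, s⟩ => by
    rw [show ((finSigmaFinEquivOrd ⟨⟨0, hi⟩, s⟩ : Fin (∑ i, k i)) : ℕ) = s.val from rfl]
    simp
  | (n+1), k, ⟨⟨i+1, hi⟩, s⟩ => by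
    have IH := finSigmaFinEquivOrd_val (n := n) (k := fun t : Fin n => k t.succ)
      ⟨⟨i, Nat.lt_of_succ_lt_succ hi⟩, s⟩
    have h0 : ((finSigmaFinEquivOrd ⟨⟨i+1, hi⟩, s⟩ : Fin (∑ i, k i)) : ℕ)
        = k 0 + ((finSigmaFinEquivOrd (⟨⟨i, Nat.lt_of_succ_lt_succ hi⟩, s⟩ :
            Σ t : Fin n, Fin (k t.succ)) : Fin (∑ t : Fin n, k t.succ)) : ℕ) := rfl
    rw [h0, IH]
    show k 0 + ((∑ j : Fin i,
          k (Fin.succ (Fin.castLE (Nat.le_of_lt (Nat.lt_of_succ_lt_succ hi)) j))) + s.val)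
      = (∑ j : Fin (i+1), k (Fin.castLE (Nat.le_of_lt hi) j)) + s.val
    rw [Fin.sum_univ_succ]
    have h2 : ∀ j : Fin i, k (Fin.succ (Fin.castLE (Nat.le_of_lt (Nat.lt_of_succ_lt_succ hi)) j))
        = k (Fin.castLE (Nat.le_of_lt hi) (Fin.succ j)) := fun j => rfl
    rw [Finset.sum_congr rfl fun j _ => h2 j]
    have h1 : k (Fin.castLE (Nat.le_of_lt hi) 0) = k 0 := rfl
    omega

section Aux
set_option linter.unusedSectionVars false
variable (G : ℕ → Type) [∀ n, Group (G n)]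

theorem gcast_heq {m n : ℕ} (h : m = n) (x : G m) : HEq (gcast G h x) x := by
  subst h; rfl

theorem gcast_eq_of_heq {m n : ℕ} (h : m = n) {x : G m} {y : G n} (hxy : HEq x y) :
    gcast G h x = y := by subst h; exact eq_of_heq hxy

theorem heq_of_gcast_eq {m n : ℕ} (h : m = n) {x : G m} {y : G n}
    (hxy : gcast G h x = y) : HEq x y := by subst h; exact heq_of_eq hxy

theorem gcast_mul {m n : ℕ} (h : m = n) (x y : G m) :
    gcast G h (x * y) = gcast G h x * gcast G h y := by subst h; rfl

theorem one_heq {m n : ℕ} (h : m = n) : HEq (1 : G m) (1 : G n) := by subst h; rfl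

variable (𝒢 : GroupOperad G)

theorem gamma_congr {m n : ℕ} (h : m = n) {k : Fin m → ℕ} {k' : Fin n → ℕ}
    (hk : ∀ j : Fin m, k j = k' (Fin.cast h j))
    {x : G m} {x' : G n} (hx : HEq x x')
    {xs : ∀ j, G (k j)} {xs' : ∀ j, G (k' j)}
    (hxs : ∀ j : Fin m, HEq (xs j) (xs' (Fin.cast h j))) :
    HEq (𝒢.γ x xs) (𝒢.γ x' xs') := by
  subst h
  have hk' : k = k' := funext fun j => hk j
  subst hk'
  have hx' : x = x' := eq_of_heq hx
  subst hx'
  have hxs' : xs = xs' := funext fun j => eq_of_heq (hxs j)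
  subst hxs'
  rfl

theorem inter_one {n : ℕ} {k : Fin n → ℕ} (x y : G n) (xs ys : ∀ i, G (k i))
    (hy : 𝒢.π y = 1) :
    𝒢.γ (x * y) (fun i => xs i * ys i) = 𝒢.γ x xs * 𝒢.γ y ys := by
  rw [𝒢.interchange x y xs ys]
  congr 1
  apply gcast_eq_of_heq
  rw [hy]
  exact HEq.rfl

theorem γ_one_one {n : ℕ} {k : Fin n → ℕ} :
    𝒢.γ (1 : G n) (fun i => (1 : G (k i))) = 1 := by
  have H := inter_one G 𝒢 (1 : G n) 1 (fun i => (1 : G (k i))) (fun i => 1) (map_one _)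
  simp only [mul_one] at H
  exact (mul_left_cancel (a := 𝒢.γ (1 : G n) (fun i => (1 : G (k i))))
    (by rw [mul_one]; exact H)).symm

theorem e_eq_one : 𝒢.e = 1 := by
  have hM : (∑ _i : Fin 1, 1) = 1 := by simp
  have k1 : HEq (𝒢.γ (k := fun _ : Fin 1 => 1) 𝒢.e (fun _ => (1 : G 1))) (1 : G 1) :=
    heq_of_gcast_eq G _ (𝒢.γ_id (1 : G 1))
  have k2 : HEq (𝒢.γ (k := fun _ : Fin 1 => 1) (1 : G 1) (fun _ => 𝒢.e)) (1 : G 1) :=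
    heq_of_gcast_eq G _ (𝒢.id_γ (1 : G 1))
  have k4 : HEq (𝒢.γ (k := fun _ : Fin 1 => 1) 𝒢.e (fun _ => 𝒢.e)) 𝒢.e :=
    heq_of_gcast_eq G _ (𝒢.γ_id 𝒢.e)
  have h3 := inter_one G 𝒢 (k := fun _ : Fin 1 => 1) 𝒢.e 1 (fun _ => (1 : G 1))
    (fun _ => 𝒢.e) (map_one _)
  simp only [mul_one, one_mul] at h3
  have a1 : 𝒢.γ (k := fun _ : Fin 1 => 1) 𝒢.e (fun _ => (1 : G 1)) = gcast G hM.symm 1 :=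
    eq_of_heq (k1.trans (gcast_heq G hM.symm 1).symm)
  have a2 : 𝒢.γ (k := fun _ : Fin 1 => 1) (1 : G 1) (fun _ => 𝒢.e) = gcast G hM.symm 1 :=
    eq_of_heq (k2.trans (gcast_heq G hM.symm 1).symm)
  rw [a1, a2, ← gcast_mul, mul_one] at h3
  rw [h3] at k4
  exact (eq_of_heq ((gcast_heq G hM.symm 1).symm.trans k4)).symm

theorem γ_one_id {m : ℕ} (x : G m) :
    HEq (𝒢.γ (k := fun _ : Fin 1 => m) (1 : G 1) (fun _ => x)) x := by
  have h := heq_of_gcast_eq G _ (𝒢.γ_id x)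
  rwa [e_eq_one G 𝒢] at h


theorem γ_mul {n : ℕ} {k : Fin n → ℕ} (xs ys : ∀ i, G (k i)) :
    𝒢.γ (1 : G n) (fun i => xs i * ys i) = 𝒢.γ 1 xs * 𝒢.γ 1 ys := by
  have := inter_one G 𝒢 1 1 xs ys (map_one _)
  simpa using this

theorem γ_list_prod {n : ℕ} {k : Fin n → ℕ} (L : List (Fin n)) (δ : Fin n → ∀ i, G (k i)) :
    𝒢.γ (1 : G n) (fun i => (L.map fun a => δ a i).prod)
      = (L.map fun a => 𝒢.γ (1 : G n) (δ a)).prod := by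
  induction L with
  | nil => simpa using γ_one_one G 𝒢
  | cons a L ih =>
    simp only [List.map_cons, List.prod_cons]
    rw [γ_mul G 𝒢 (δ a) (fun i => (L.map fun b => δ b i).prod), ih]

theorem prod_mulSingle {n : ℕ} {k : Fin n → ℕ} (f : ∀ i, G (k i)) (j : Fin n)
    (L : List (Fin n)) (hnd : L.Nodup) :
    ((L.map fun a => Pi.mulSingle a (f a) j).prod) = if j ∈ L then f j else 1 := by
  induction L with
  | nil => simp
  | cons a L ih =>
    simp only [List.map_cons, List.prod_cons, List.nodup_cons] at *
    by_cases hj : j = a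
    · subst hj
      rw [Pi.mulSingle_eq_same, ih hnd.2]
      simp [hnd.1]
    · rw [Pi.mulSingle_eq_of_ne hj, ih hnd.2, one_mul]
      simp [hj]

theorem γ_as_prod {n : ℕ} {k : Fin n → ℕ} (xs : ∀ i, G (k i)) :
    𝒢.γ (1 : G n) xs
      = ((List.finRange n).map fun a => 𝒢.γ (1 : G n) (Pi.mulSingle a (xs a))).prod := by
  rw [← γ_list_prod G 𝒢 (List.finRange n) (fun a => Pi.mulSingle a (xs a))]
  congr 1
  funext i
  rw [prod_mulSingle G xs i (List.finRange n) (List.nodup_finRange n)]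
  simp


theorem sumA {n : ℕ} (k : Fin n → ℕ) (i : Fin n) :
    (∑ s : Fin i.val, k ⟨s.val, Nat.lt_trans s.isLt i.isLt⟩)
      = ∑ j ∈ Finset.univ.filter (fun j => j < i), k j := by
  apply Finset.sum_bij' (i := fun (s : Fin i.val) _ => (⟨s.val, Nat.lt_trans s.isLt i.isLt⟩ : Fin n))
    (j := fun (j : Fin n) (hj : j ∈ Finset.univ.filter (fun j => j < i)) =>
      (⟨j.val, (Finset.mem_filter.mp hj).2⟩ : Fin i.val))
  case hi =>
    intro s _
    simp only [Finset.mem_filter, Finset.mem_univ, true_and]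
    exact s.isLt
  case hj => intro j hj; simp
  case left_neg => intro s _; rfl
  case right_neg => intro j hj; rfl
  case h => intro s _; rfl

theorem sumB {n : ℕ} (k : Fin n → ℕ) (i : Fin n) :
    (∑ s : Fin (n - i.val - 1), k ⟨i.val + 1 + s.val, by have h1 := s.isLt; omega⟩)
      = ∑ j ∈ Finset.univ.filter (fun j => i < j), k j := by
  apply Finset.sum_bij' (i := fun (s : Fin (n - i.val - 1)) _ =>
      (⟨i.val + 1 + s.val, by have h1 := s.isLt; omega⟩ : Fin n))
    (j := fun (j : Fin n) (hj : j ∈ Finset.univ.filter (fun j => i < j)) =>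
      (⟨j.val - i.val - 1, by have h2 : i < j := (Finset.mem_filter.mp hj).2
                              have h3 := j.isLt
                              have h4 : i.val < j.val := h2
                              omega⟩ : Fin (n - i.val - 1)))
  case hi =>
    intro s _
    simp only [Finset.mem_filter, Finset.mem_univ, true_and]
    show i.val < i.val + 1 + s.val
    omega
  case hj => intro j hj; simp
  case left_neg =>
    intro s _
    apply Fin.ext
    show i.val + 1 + s.val - i.val - 1 = s.val
    omega
  case right_neg =>
    intro j hj
    have h2 : i.val < j.val := (Finset.mem_filter.mp hj).2
    apply Fin.ext
    show i.val + 1 + (j.val - i.val - 1) = j.val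
    omega
  case h => intro s _; rfl


def lAux {n : ℕ} (k : Fin n → ℕ) (i : Fin n) :
    ∀ t : Fin 3, Fin (v3 i.val 1 (n - i.val - 1) t) → ℕ
  | ⟨0, _⟩ => fun s => k ⟨s.val, Nat.lt_trans s.isLt i.isLt⟩
  | ⟨1, _⟩ => fun _ => k i
  | ⟨2, _⟩ => fun s => k ⟨i.val + 1 + s.val, by
      have h1 : s.val < n - i.val - 1 := s.isLt; omega⟩

def ysAux {G : ℕ → Type} [∀ m, Group (G m)] {n : ℕ} {k : Fin n → ℕ}
    (xs : ∀ i, G (k i)) (i : Fin n) :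
    ∀ t : Fin 3, ∀ s : Fin (v3 i.val 1 (n - i.val - 1) t), G (lAux k i t s)
  | ⟨0, _⟩ => fun _ => 1
  | ⟨1, _⟩ => fun _ => xs i
  | ⟨2, _⟩ => fun _ => 1

section Main
set_option linter.unusedSectionVars false
variable (G : ℕ → Type) [∀ n, Group (G n)] (𝒢 : GroupOperad G)

theorem factor_eq {n : ℕ} {k : Fin n → ℕ} (xs : ∀ i, G (k i)) (i : Fin n) :
    gcast G ((sum_v3 _ _ _).trans (partial_sum_eq k i))
      (𝒢.γ (1 : G 3)
        (f3 (1 : G (∑ j ∈ Finset.univ.filter (fun j => j < i), k j))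
            (xs i)
            (1 : G (∑ j ∈ Finset.univ.filter (fun j => i < j), k j))))
      = 𝒢.γ (1 : G n) (Pi.mulSingle i (xs i)) := by
  have hb : ∀ s : Fin (n - i.val - 1), i.val + 1 + s.val < n := by
    intro s; have h1 := s.isLt; have h2 := i.isLt; omega
  have hsum : (∑ t, v3 i.val 1 (n - i.val - 1) t) = n := by
    rw [sum_v3]; have := i.isLt; omega
  -- key pointwise facts about the flattening
  have hv30 : v3 i.val 1 (n - i.val - 1) 0 = i.val := rfl
  have hv31 : v3 i.val 1 (n - i.val - 1) 1 = 1 := rfl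
  have hkey : ∀ p : Σ t : Fin 3, Fin (v3 i.val 1 (n - i.val - 1) t),
      lAux k i p.1 p.2 = k (Fin.cast hsum (finSigmaFinEquivOrd p)) := by
    rintro ⟨⟨t, ht⟩, s⟩
    interval_cases t
    · refine congrArg k (Fin.ext ?_)
      rw [Fin.coe_cast, finSigmaFinEquivOrd_val]
      simp
    · have hs1 : s.val < 1 := s.isLt
      refine congrArg k (Fin.ext ?_)
      rw [Fin.coe_cast, finSigmaFinEquivOrd_val]
      simp [hv30]
      omega
    · refine congrArg k (Fin.ext ?_)
      rw [Fin.coe_cast, finSigmaFinEquivOrd_val]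
      simp [hv30, hv31, show ∀ h : (2:ℕ) ≤ 3, Fin.castLE h (1 : Fin 2) = (1 : Fin 3) from
        fun _ => rfl]
  have hys : ∀ p : Σ t : Fin 3, Fin (v3 i.val 1 (n - i.val - 1) t),
      HEq (ysAux xs i p.1 p.2) (Pi.mulSingle (M := fun j => G (k j)) i (xs i) (Fin.cast hsum (finSigmaFinEquivOrd p))) := by
    rintro ⟨⟨t, ht⟩, s⟩
    interval_cases t
    · have hvv : (Fin.cast hsum (finSigmaFinEquivOrd (⟨⟨0, ht⟩, s⟩ :
          Σ t : Fin 3, Fin (v3 i.val 1 (n - i.val - 1) t)))).val = s.val := by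
        rw [Fin.coe_cast, finSigmaFinEquivOrd_val]; simp
      have hne : Fin.cast hsum (finSigmaFinEquivOrd (⟨⟨0, ht⟩, s⟩ :
          Σ t : Fin 3, Fin (v3 i.val 1 (n - i.val - 1) t))) ≠ i := by
        intro hc
        have h1 := congrArg Fin.val hc
        rw [hvv] at h1
        have h2 : s.val < i.val := s.isLt
        omega
      rw [Pi.mulSingle_eq_of_ne hne]
      exact one_heq G (hkey ⟨⟨0, ht⟩, s⟩)
    · have hvv : (Fin.cast hsum (finSigmaFinEquivOrd (⟨⟨1, ht⟩, s⟩ :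
          Σ t : Fin 3, Fin (v3 i.val 1 (n - i.val - 1) t)))).val = i.val := by
        rw [Fin.coe_cast, finSigmaFinEquivOrd_val]; simp [hv30]
        exact Nat.lt_one_iff.mp s.isLt
      have heqi : Fin.cast hsum (finSigmaFinEquivOrd (⟨⟨1, ht⟩, s⟩ :
          Σ t : Fin 3, Fin (v3 i.val 1 (n - i.val - 1) t))) = i := Fin.ext hvv
      rw [heqi, Pi.mulSingle_eq_same]
      exact HEq.rfl
    · have hvv : (Fin.cast hsum (finSigmaFinEquivOrd (⟨⟨2, ht⟩, s⟩ :
          Σ t : Fin 3, Fin (v3 i.val 1 (n - i.val - 1) t)))).val = i.val + 1 + s.val := by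
        rw [Fin.coe_cast, finSigmaFinEquivOrd_val]
        simp [hv30, hv31, show ∀ h : (2:ℕ) ≤ 3, Fin.castLE h (1 : Fin 2) = (1 : Fin 3) from
          fun _ => rfl]
      have hne : Fin.cast hsum (finSigmaFinEquivOrd (⟨⟨2, ht⟩, s⟩ :
          Σ t : Fin 3, Fin (v3 i.val 1 (n - i.val - 1) t))) ≠ i := by
        intro hc
        have h1 := congrArg Fin.val hc
        rw [hvv] at h1
        omega
      rw [Pi.mulSingle_eq_of_ne hne]
      exact one_heq G (hkey ⟨⟨2, ht⟩, s⟩)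
  -- associativity instance
  have H := 𝒢.γ_assoc (k := v3 i.val 1 (n - i.val - 1)) (l := lAux k i)
    (1 : G 3) (f3 (1 : G i.val) (1 : G 1) (1 : G (n - i.val - 1))) (ysAux xs i)
  have hxs2 : f3 (1 : G i.val) (1 : G 1) (1 : G (n - i.val - 1))
      = fun t => (1 : G (v3 i.val 1 (n - i.val - 1) t)) := by
    funext t
    match t with
    | ⟨0, _⟩ => rfl
    | ⟨1, _⟩ => rfl
    | ⟨2, _⟩ => rfl
  rw [hxs2, γ_one_one G 𝒢] at H
  apply gcast_eq_of_heq
  have c1 : HEq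
      (𝒢.γ (1 : G 3)
        (f3 (1 : G (∑ j ∈ Finset.univ.filter (fun j => j < i), k j))
            (xs i)
            (1 : G (∑ j ∈ Finset.univ.filter (fun j => i < j), k j))))
      (𝒢.γ (1 : G 3)
        (fun t => 𝒢.γ (1 : G (v3 i.val 1 (n - i.val - 1) t)) (ysAux xs i t))) := by
    apply gamma_congr G 𝒢 rfl ?_ HEq.rfl ?_
    · rintro ⟨t, ht⟩
      interval_cases t
      · exact (sumA k i).symm
      · exact (Fin.sum_univ_one (fun _ : Fin 1 => k i)).symm
      · exact (sumB k i).symm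
    · rintro ⟨t, ht⟩
      interval_cases t
      · show HEq (1 : G (∑ j ∈ Finset.univ.filter (fun j => j < i), k j))
          (𝒢.γ (1 : G i.val) (fun s : Fin i.val => (1 : G (lAux k i ⟨0, ht⟩ s))))
        exact (one_heq G (sumA k i).symm).trans (heq_of_eq (γ_one_one G 𝒢).symm)
      · show HEq (xs i) (𝒢.γ (k := fun _ : Fin 1 => k i) (1 : G 1) (fun _ => xs i))
        exact (γ_one_id G 𝒢 (xs i)).symm
      · show HEq (1 : G (∑ j ∈ Finset.univ.filter (fun j => i < j), k j))
          (𝒢.γ (1 : G (n - i.val - 1))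
            (fun s : Fin (n - i.val - 1) => (1 : G (lAux k i ⟨2, ht⟩ s))))
        exact (one_heq G (sumB k i).symm).trans (heq_of_eq (γ_one_one G 𝒢).symm)
  have c2 : HEq
      (𝒢.γ (k := fun j => lAux k i (finSigmaFinEquivOrd.symm j).1 (finSigmaFinEquivOrd.symm j).2)
        (1 : G (∑ t, v3 i.val 1 (n - i.val - 1) t))
        (fun j => ysAux xs i (finSigmaFinEquivOrd.symm j).1 (finSigmaFinEquivOrd.symm j).2))
      (𝒢.γ (1 : G n) (Pi.mulSingle i (xs i))) := by
    apply gamma_congr G 𝒢 hsum ?_ (one_heq G hsum) ?_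
    · intro j
      have h := hkey (finSigmaFinEquivOrd.symm j)
      rwa [Equiv.apply_symm_apply] at h
    · intro j
      have h := hys (finSigmaFinEquivOrd.symm j)
      rwa [Equiv.apply_symm_apply] at h
  exact c1.trans ((heq_of_gcast_eq G _ H).symm.trans c2)

end Main
/-- Decomposition of operadic composition in a group operad: `γ(x; x₁,…,xₙ)`
is `γ(x; e,…,e)` times the ordered product of the padded elements
`γ(e₃; e_{k₁+⋯+k_{i−1}}, xᵢ, e_{k_{i+1}+⋯+kₙ})`. -/
theorem groupOperad_decompose (G : ℕ → Type) [∀ n, Group (G n)]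
    (𝒢 : GroupOperad G) {n : ℕ} {k : Fin n → ℕ}
    (x : G n) (xs : ∀ i, G (k i)) :
    𝒢.γ x xs
      = 𝒢.γ x (fun i => (1 : G (k i)))
        * ((List.finRange n).map fun i =>
            gcast G ((sum_v3 _ _ _).trans (partial_sum_eq k i))
              (𝒢.γ (1 : G 3)
                (f3 (1 : G (∑ j ∈ Finset.univ.filter (fun j => j < i), k j))
                    (xs i)
                    (1 : G (∑ j ∈ Finset.univ.filter (fun j => i < j), k j))))).prod := by

  have step1 : 𝒢.γ x xs = 𝒢.γ x (fun i => (1 : G (k i))) * 𝒢.γ (1 : G n) xs := by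
    have h := inter_one G 𝒢 x 1 (fun i => (1 : G (k i))) xs (map_one _)
    simpa using h
  rw [step1, γ_as_prod G 𝒢 xs]
  congr 2
  exact congrArg (fun f => List.map f (List.finRange n))
    (funext fun i => (factor_eq G 𝒢 xs i).symm)
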